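/- Let (V,⟨·,·⟩) be a real inner product space of dimension n ≥ 4 and let R be an algebraic curvature tensor on V having 3-nonnegative curvature operator of the second kind. Then for every orthonormal four-frame {e_1,e_2,e_3,e_4} in V and every real number λ, one has R_{1313} + λ²R_{1414} + R_{2323} + λ²R_{2424} - 4λR_{1234} ≥ 0. -/

import Mathlib

open scoped RealInnerProductSpace

variable {V : Type*} [NormedAddCommGroup V] [InnerProductSpace ℝ V]

/-- `R` is an algebraic curvature tensor: antisymmetric in the first two slots,
symmetric under exchange of the first and second pairs, and satisfying the
first Bianchi identity. -/
def IsAlgCurvatureTensor (R : V →ₗ[ℝ] V →ₗ[ℝ] V →ₗ[ℝ] V →ₗ[ℝ] ℝ) : Prop :=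
  (∀ x y z w : V, R x y z w = - R y x z w) ∧
  (∀ x y z w : V, R x y z w = R z w x y) ∧
  (∀ x y z w : V, R x y z w + R y z x w + R z x y w = 0)

/-- The Ricci curvature `Ric(x,y) = Σ_j R(x,e_j,y,e_j)` with respect to an
orthonormal basis. -/
noncomputable def ricci {n : ℕ} (b : OrthonormalBasis (Fin n) ℝ V)
    (R : V →ₗ[ℝ] V →ₗ[ℝ] V →ₗ[ℝ] V →ₗ[ℝ] ℝ) (x y : V) : ℝ :=
  ∑ j, R x (b j) y (b j)

/-- The scalar curvature `S = Σ_{i,j} R_{ijij}`. -/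
noncomputable def scalarCurv {n : ℕ} (b : OrthonormalBasis (Fin n) ℝ V)
    (R : V →ₗ[ℝ] V →ₗ[ℝ] V →ₗ[ℝ] V →ₗ[ℝ] ℝ) : ℝ :=
  ∑ i, ∑ j, R (b i) (b j) (b i) (b j)

/-- `φ` is a symmetric bilinear form which is traceless with respect to the
orthonormal basis `b`. -/
def IsTracelessSymForm {n : ℕ} (b : OrthonormalBasis (Fin n) ℝ V)
    (φ : V →ₗ[ℝ] V →ₗ[ℝ] ℝ) : Prop :=
  (∀ x y : V, φ x y = φ y x) ∧ (∑ i, φ (b i) (b i) = 0)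

/-- The inner product `⟨φ,ψ⟩ = Σ_{i,j} φ(e_i,e_j) ψ(e_i,e_j)` of bilinear forms. -/
noncomputable def formInner {n : ℕ} (b : OrthonormalBasis (Fin n) ℝ V)
    (φ ψ : V →ₗ[ℝ] V →ₗ[ℝ] ℝ) : ℝ :=
  ∑ i, ∑ j, φ (b i) (b j) * ψ (b i) (b j)

/-- The curvature operator of the second kind
`R̊(φ,ψ) = Σ_{i,j,k,l} R_{ijkl} φ(e_i,e_l) ψ(e_j,e_k)`. -/
noncomputable def secondKind {n : ℕ} (b : OrthonormalBasis (Fin n) ℝ V)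
    (R : V →ₗ[ℝ] V →ₗ[ℝ] V →ₗ[ℝ] V →ₗ[ℝ] ℝ)
    (φ ψ : V →ₗ[ℝ] V →ₗ[ℝ] ℝ) : ℝ :=
  ∑ i, ∑ j, ∑ k, ∑ l,
    R (b i) (b j) (b k) (b l) * φ (b i) (b l) * ψ (b j) (b k)

/-- `R` has `k`-nonnegative curvature operator of the second kind:
`Σ_{a=1}^k R̊(φ_a,φ_a) ≥ 0` for every orthonormal `k`-tuple of traceless
symmetric bilinear forms. -/
def kNonnegSecondKind {n : ℕ} (b : OrthonormalBasis (Fin n) ℝ V)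
    (R : V →ₗ[ℝ] V →ₗ[ℝ] V →ₗ[ℝ] V →ₗ[ℝ] ℝ) (k : ℕ) : Prop :=
  ∀ φ : Fin k → (V →ₗ[ℝ] V →ₗ[ℝ] ℝ),
    (∀ a, IsTracelessSymForm b (φ a)) →
    (∀ a a', formInner b (φ a) (φ a') = if a = a' then 1 else 0) →
    0 ≤ ∑ a, secondKind b R (φ a) (φ a)

/-- `R` has `k`-positive curvature operator of the second kind:
`Σ_{a=1}^k R̊(φ_a,φ_a) > 0` for every orthonormal `k`-tuple of traceless
symmetric bilinear forms. -/
def kPosSecondKind {n : ℕ} (b : OrthonormalBasis (Fin n) ℝ V)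
    (R : V →ₗ[ℝ] V →ₗ[ℝ] V →ₗ[ℝ] V →ₗ[ℝ] ℝ) (k : ℕ) : Prop :=
  ∀ φ : Fin k → (V →ₗ[ℝ] V →ₗ[ℝ] ℝ),
    (∀ a, IsTracelessSymForm b (φ a)) →
    (∀ a a', formInner b (φ a) (φ a') = if a = a' then 1 else 0) →
    0 < ∑ a, secondKind b R (φ a) (φ a)

/-! Write `u ⊙ v` for the symmetric product `u ⊗ v + v ⊗ u`, and number the frame `e₁, …, e₄`
(`e 0, …, e 3` below). The forms `φ₁ = e₁ ⊙ e₃ + λ e₂ ⊙ e₄` and `φ₂ = λ e₁ ⊙ e₄ - e₂ ⊙ e₃` are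
traceless, orthogonal and of equal norm, and by the first Bianchi identity
`R̊(φ₁, φ₁) + R̊(φ₂, φ₂) = 2 (R₁₃₁₃ + λ² R₁₄₁₄ + R₂₃₂₃ + λ² R₂₄₂₄) - 12 λ R₁₂₃₄`.
Three-nonnegativity, applied to `φ₁`, `φ₂` and a third traceless form `ψ` orthogonal to both,
bounds this from below by a multiple of `-R̊(ψ, ψ) / |ψ|²`. Taking for `ψ` the forms
`e₁ ⊙ e₂`, `e₁² + e₂² - 2 e₃²` and `e₁² + e₂² - 2 e₄²` and averaging the three inequalities with
weights `1 + λ²`, `1`, `λ²` cancels `R₁₂₁₂` and leaves `12 (1 + λ²)` times the claimed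
expression. -/

noncomputable section

open Finset

def outerForm (u v : V) : V →ₗ[ℝ] V →ₗ[ℝ] ℝ :=
  (innerₛₗ ℝ u).smulRight (innerₛₗ ℝ v)

@[simp] lemma outerForm_apply (u v x y : V) : outerForm u v x y = ⟪u, x⟫ * ⟪v, y⟫ := rfl

def symProd (u v : V) : V →ₗ[ℝ] V →ₗ[ℝ] ℝ := outerForm u v + outerForm v u

def diagForm (u v w : V) : V →ₗ[ℝ] V →ₗ[ℝ] ℝ :=
  outerForm u u + outerForm v v - (2 : ℝ) • outerForm w w

/-- `rw` and `simp` do not find `map_sub` on this domain: the instances carried by the type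
`V →ₗ[ℝ] V →ₗ[ℝ] ℝ` agree with the ones `map_sub` expects only up to unfolding. -/
lemma map_sub_form {M : Type*} [AddCommGroup M] [Module ℝ M]
    (f : (V →ₗ[ℝ] V →ₗ[ℝ] ℝ) →ₗ[ℝ] M) (φ ψ : V →ₗ[ℝ] V →ₗ[ℝ] ℝ) : f (φ - ψ) = f φ - f ψ :=
  map_sub f φ ψ

namespace IsAlgCurvatureTensor

variable {R : V →ₗ[ℝ] V →ₗ[ℝ] V →ₗ[ℝ] V →ₗ[ℝ] ℝ} (hR : IsAlgCurvatureTensor R)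
include hR

lemma antisymm_right (x y z w : V) : R x y z w = -R x y w z := by
  linear_combination hR.2.1 x y z w + hR.1 z w x y - hR.2.1 w z x y

lemma apply_self_left (x z w : V) : R x x z w = 0 := by
  linear_combination (1 / 2 : ℝ) * hR.1 x x z w

lemma apply_swap_swap (x y z w : V) : R y x w z = R x y z w := by
  rw [hR.1, hR.antisymm_right, neg_neg]

end IsAlgCurvatureTensor

section Bilinear

variable {n : ℕ} (b : OrthonormalBasis (Fin n) ℝ V) (R : V →ₗ[ℝ] V →ₗ[ℝ] V →ₗ[ℝ] V →ₗ[ℝ] ℝ)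

lemma OrthonormalBasis.sum_inner_mul_inner' (u v : V) :
    ∑ i, ⟪u, b i⟫ * ⟪v, b i⟫ = ⟪u, v⟫ := by
  simpa only [real_inner_comm v] using b.sum_inner_mul_inner u v

def formInnerBilin : (V →ₗ[ℝ] V →ₗ[ℝ] ℝ) →ₗ[ℝ] (V →ₗ[ℝ] V →ₗ[ℝ] ℝ) →ₗ[ℝ] ℝ :=
  LinearMap.mk₂ ℝ (formInner b)
    (fun _ _ _ => by simp only [formInner, LinearMap.add_apply, add_mul, sum_add_distrib])
    (fun _ _ _ => by simp only [formInner, LinearMap.smul_apply, smul_eq_mul, mul_sum, mul_assoc])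
    (fun _ _ _ => by simp only [formInner, LinearMap.add_apply, mul_add, sum_add_distrib])
    (fun _ _ _ => by
      simp only [formInner, LinearMap.smul_apply, smul_eq_mul, mul_sum, mul_left_comm])

lemma formInner_eq_formInnerBilin (φ ψ : V →ₗ[ℝ] V →ₗ[ℝ] ℝ) :
    formInner b φ ψ = formInnerBilin b φ ψ := rfl

lemma formInner_comm (φ ψ : V →ₗ[ℝ] V →ₗ[ℝ] ℝ) : formInner b φ ψ = formInner b ψ φ := by
  simp only [formInner, mul_comm]

@[simp] lemma formInnerBilin_outerForm (u v u' v' : V) :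
    formInnerBilin b (outerForm u v) (outerForm u' v') = ⟪u, u'⟫ * ⟪v, v'⟫ := by
  rw [← formInner_eq_formInnerBilin, formInner, ← b.sum_inner_mul_inner' u u',
    ← b.sum_inner_mul_inner' v v', sum_mul_sum]
  refine sum_congr rfl fun i _ => sum_congr rfl fun j _ => ?_
  simp only [outerForm_apply]; ring

def secondKindBilin : (V →ₗ[ℝ] V →ₗ[ℝ] ℝ) →ₗ[ℝ] (V →ₗ[ℝ] V →ₗ[ℝ] ℝ) →ₗ[ℝ] ℝ :=
  LinearMap.mk₂ ℝ (secondKind b R)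
    (fun _ _ _ => by simp only [secondKind, LinearMap.add_apply, mul_add, add_mul, sum_add_distrib])
    (fun _ _ _ => by
      simp only [secondKind, LinearMap.smul_apply, smul_eq_mul, mul_sum]
      exact sum_congr rfl fun _ _ => sum_congr rfl fun _ _ => sum_congr rfl fun _ _ =>
        sum_congr rfl fun _ _ => by ring)
    (fun _ _ _ => by simp only [secondKind, LinearMap.add_apply, mul_add, sum_add_distrib])
    (fun _ _ _ => by
      simp only [secondKind, LinearMap.smul_apply, smul_eq_mul, mul_sum]
      exact sum_congr rfl fun _ _ => sum_congr rfl fun _ _ => sum_congr rfl fun _ _ =>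
        sum_congr rfl fun _ _ => by ring)

lemma secondKind_eq_secondKindBilin (φ ψ : V →ₗ[ℝ] V →ₗ[ℝ] ℝ) :
    secondKind b R φ ψ = secondKindBilin b R φ ψ := rfl

@[simp] lemma secondKindBilin_outerForm (u v u' v' : V) :
    secondKindBilin b R (outerForm u v) (outerForm u' v') = R u u' v' v := by
  -- expand one argument at a time so that the sums come out in the order `i, j, k, l`
  conv_rhs =>
    rw [← b.sum_repr' u]
    simp only [map_sum, map_smul, LinearMap.sum_apply, LinearMap.smul_apply, smul_eq_mul]
    rw [← b.sum_repr' u']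
    simp only [map_sum, map_smul, LinearMap.sum_apply, LinearMap.smul_apply, smul_eq_mul, mul_sum]
    rw [← b.sum_repr' v']
    simp only [map_sum, map_smul, LinearMap.sum_apply, LinearMap.smul_apply, smul_eq_mul, mul_sum]
    rw [← b.sum_repr' v]
    simp only [map_sum, map_smul, smul_eq_mul, mul_sum]
  rw [← secondKind_eq_secondKindBilin, secondKind]
  refine sum_congr rfl fun i _ => sum_congr rfl fun j _ => sum_congr rfl fun k _ =>
    sum_congr rfl fun l _ => ?_
  simp only [outerForm_apply, real_inner_comm (b _)]; ring

end Bilinear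

section TracelessForms

variable {n : ℕ} {b : OrthonormalBasis (Fin n) ℝ V}

lemma IsTracelessSymForm.add {φ ψ : V →ₗ[ℝ] V →ₗ[ℝ] ℝ} (hφ : IsTracelessSymForm b φ)
    (hψ : IsTracelessSymForm b ψ) : IsTracelessSymForm b (φ + ψ) :=
  ⟨fun x y => by simp only [LinearMap.add_apply, hφ.1 x y, hψ.1 x y],
    by simp only [LinearMap.add_apply, sum_add_distrib, hφ.2, hψ.2, add_zero]⟩

lemma IsTracelessSymForm.sub {φ ψ : V →ₗ[ℝ] V →ₗ[ℝ] ℝ} (hφ : IsTracelessSymForm b φ)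
    (hψ : IsTracelessSymForm b ψ) : IsTracelessSymForm b (φ - ψ) :=
  ⟨fun x y => by simp only [LinearMap.sub_apply, hφ.1 x y, hψ.1 x y],
    by simp only [LinearMap.sub_apply, sum_sub_distrib, hφ.2, hψ.2, sub_zero]⟩

lemma IsTracelessSymForm.smul {φ : V →ₗ[ℝ] V →ₗ[ℝ] ℝ} (hφ : IsTracelessSymForm b φ) (c : ℝ) :
    IsTracelessSymForm b (c • φ) :=
  ⟨fun x y => by simp only [LinearMap.smul_apply, hφ.1 x y],
    by simp only [LinearMap.smul_apply, smul_eq_mul, ← mul_sum, hφ.2, mul_zero]⟩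

lemma isTracelessSymForm_symProd {u v : V} (h : ⟪u, v⟫ = 0) :
    IsTracelessSymForm b (symProd u v) :=
  ⟨fun x y => by simp only [symProd, LinearMap.add_apply, outerForm_apply]; ring,
    by simp [symProd, sum_add_distrib, b.sum_inner_mul_inner', real_inner_comm u v, h]⟩

lemma isTracelessSymForm_diagForm {u v w : V} (hu : ‖u‖ = 1) (hv : ‖v‖ = 1) (hw : ‖w‖ = 1) :
    IsTracelessSymForm b (diagForm u v w) :=
  ⟨fun x y => by simp only [diagForm, LinearMap.add_apply, LinearMap.sub_apply,
      LinearMap.smul_apply, outerForm_apply, smul_eq_mul]; ring,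
    by simp [diagForm, sum_add_distrib, sum_sub_distrib, ← mul_sum, b.sum_inner_mul_inner',
      hu, hv, hw]; norm_num⟩

lemma kNonnegSecondKind.sum_div_nonneg {R : V →ₗ[ℝ] V →ₗ[ℝ] V →ₗ[ℝ] V →ₗ[ℝ] ℝ} {k : ℕ}
    (h : kNonnegSecondKind b R k) (ψ : Fin k → V →ₗ[ℝ] V →ₗ[ℝ] ℝ)
    (hψ : ∀ a, IsTracelessSymForm b (ψ a)) (hpos : ∀ a, 0 < formInner b (ψ a) (ψ a))
    (horth : Pairwise fun a a' => formInner b (ψ a) (ψ a') = 0) :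
    0 ≤ ∑ a, secondKind b R (ψ a) (ψ a) / formInner b (ψ a) (ψ a) := by
  set c : Fin k → ℝ := fun a => (√(formInner b (ψ a) (ψ a)))⁻¹
  have hc : ∀ a, c a * c a = (formInner b (ψ a) (ψ a))⁻¹ := fun a => by
    rw [← mul_inv, Real.mul_self_sqrt (hpos a).le]
  have hunit : ∀ a a', formInner b (c a • ψ a) (c a' • ψ a') = if a = a' then 1 else 0 := by
    intro a a'
    rw [formInner_eq_formInnerBilin, map_smul, map_smul, LinearMap.smul_apply, smul_eq_mul,
      smul_eq_mul, ← formInner_eq_formInnerBilin]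
    split_ifs with haa'
    · subst haa'
      rw [← mul_assoc, hc, inv_mul_cancel₀ (hpos a).ne']
    · rw [horth haa', mul_zero, mul_zero]
  convert h (fun a => c a • ψ a) (fun a => (hψ a).smul (c a)) hunit using 2 with a
  rw [secondKind_eq_secondKindBilin b R (c a • ψ a), map_smul, map_smul, LinearMap.smul_apply,
    smul_eq_mul, smul_eq_mul, ← secondKind_eq_secondKindBilin, ← mul_assoc, hc, inv_mul_eq_div]

end TracelessForms

section CurvatureOperator

variable {n : ℕ} (b : OrthonormalBasis (Fin n) ℝ V) {R : V →ₗ[ℝ] V →ₗ[ℝ] V →ₗ[ℝ] V →ₗ[ℝ] ℝ}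
  (hR : IsAlgCurvatureTensor R)
include hR

lemma secondKind_symProd (u v x y : V) :
    secondKind b R (symProd u v) (symProd x y) = 2 * (R u x y v + R u y x v) := by
  simp only [secondKind_eq_secondKindBilin, symProd, map_add, LinearMap.add_apply,
    secondKindBilin_outerForm]
  linear_combination hR.2.1 v x y u + hR.1 y u v x - hR.antisymm_right u y v x
    + hR.2.1 v y x u + hR.1 x u v y - hR.antisymm_right u x v y

lemma secondKind_symProd_self (u v : V) :
    secondKind b R (symProd u v) (symProd u v) = 2 * R u v u v := by
  rw [secondKind_symProd b hR, hR.apply_self_left, zero_add]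

lemma secondKind_diagForm (u v w : V) :
    secondKind b R (diagForm u v w) (diagForm u v w)
      = -2 * R u v u v + 4 * R u w u w + 4 * R v w v w := by
  simp only [secondKind_eq_secondKindBilin, diagForm, map_add, map_sub_form, map_smul,
    LinearMap.add_apply, LinearMap.sub_apply, LinearMap.smul_apply, smul_eq_mul,
    secondKindBilin_outerForm, hR.apply_self_left]
  linear_combination 2 * hR.antisymm_right u v v u + hR.apply_swap_swap u v v u
    - 4 * hR.antisymm_right u w w u - 2 * hR.apply_swap_swap u w w u
    - 4 * hR.antisymm_right v w w v - 2 * hR.apply_swap_swap v w w v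

lemma secondKind_isotropicPair (u v x y : V) (lam : ℝ) :
    secondKind b R (symProd u x + lam • symProd v y) (symProd u x + lam • symProd v y)
      + secondKind b R (lam • symProd u y - symProd v x) (lam • symProd u y - symProd v x)
      = 2 * (R u x u x + lam ^ 2 * R u y u y + R v x v x + lam ^ 2 * R v y v y)
        - 12 * lam * R u v x y := by
  simp only [secondKind_eq_secondKindBilin, map_add, map_sub_form, map_smul,
    LinearMap.add_apply, LinearMap.sub_apply, LinearMap.smul_apply, smul_eq_mul]
  simp only [← secondKind_eq_secondKindBilin, secondKind_symProd b hR, hR.apply_self_left]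
  linear_combination 2 * lam * (hR.1 v u x y - hR.2.1 v x u y + hR.antisymm_right u v y x
    - hR.apply_swap_swap u v x y - hR.2.1 v y u x + 2 * hR.2.2 u v x y - 2 * hR.1 x u v y)

lemma isotropicPair_add_secondKind_nonneg (h3 : kNonnegSecondKind b R 3)
    {e : Fin 4 → V} (he : Orthonormal ℝ e) (lam : ℝ) (X : V →ₗ[ℝ] V →ₗ[ℝ] ℝ)
    (hX : IsTracelessSymForm b X) (hXpos : 0 < formInner b X X)
    (hX₁ : formInner b (symProd (e 0) (e 2) + lam • symProd (e 1) (e 3)) X = 0)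
    (hX₂ : formInner b (lam • symProd (e 0) (e 3) - symProd (e 1) (e 2)) X = 0) :
    0 ≤ formInner b X X * (R (e 0) (e 2) (e 0) (e 2) + lam ^ 2 * R (e 0) (e 3) (e 0) (e 3)
          + R (e 1) (e 2) (e 1) (e 2) + lam ^ 2 * R (e 1) (e 3) (e 1) (e 3)
          - 6 * lam * R (e 0) (e 1) (e 2) (e 3))
        + (1 + lam ^ 2) * secondKind b R X X := by
  have hee := orthonormal_iff_ite.mp he
  have hQ := secondKind_isotropicPair b hR (e 0) (e 1) (e 2) (e 3) lam
  set φ₁ := symProd (e 0) (e 2) + lam • symProd (e 1) (e 3)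
  set φ₂ := lam • symProd (e 0) (e 3) - symProd (e 1) (e 2)
  have hφ₁ : formInner b φ₁ φ₁ = 2 * (1 + lam ^ 2) := by
    simp [φ₁, formInner_eq_formInnerBilin, symProd, hee, he.1]; ring
  have hφ₂ : formInner b φ₂ φ₂ = 2 * (1 + lam ^ 2) := by
    simp [φ₂, formInner_eq_formInnerBilin, symProd, map_sub_form, hee, he.1]; ring
  have hφ₁₂ : formInner b φ₁ φ₂ = 0 := by
    simp [φ₁, φ₂, formInner_eq_formInnerBilin, symProd, map_sub_form, hee]
  have htraceless : ∀ {i j : Fin 4}, i ≠ j → IsTracelessSymForm b (symProd (e i) (e j)) :=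
    fun hij => isTracelessSymForm_symProd (he.2 hij)
  have key := h3.sum_div_nonneg ![φ₁, φ₂, X]
    (by
      intro a; fin_cases a
      · exact (htraceless (by decide)).add ((htraceless (by decide)).smul lam)
      · exact ((htraceless (by decide)).smul lam).sub (htraceless (by decide))
      · exact hX)
    (by intro a; fin_cases a <;> simp [hφ₁, hφ₂, hXpos] <;> positivity)
    (by
      intro a a' haa'
      fin_cases a <;> fin_cases a' <;> simp_all [formInner_comm b _ φ₁, formInner_comm b X φ₂])
  simp only [Fin.sum_univ_three, Matrix.cons_val_zero, Matrix.cons_val_one, Matrix.cons_val_two,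
    Matrix.head_cons, Matrix.tail_cons, hφ₁, hφ₂, ← add_div, hQ] at key
  rw [div_add_div _ _ (by positivity) hXpos.ne', le_div_iff₀ (by positivity), zero_mul] at key
  linarith

end CurvatureOperator

end

theorem stmt_10_general {n : ℕ}
    (b : OrthonormalBasis (Fin n) ℝ V)
    (R : V →ₗ[ℝ] V →ₗ[ℝ] V →ₗ[ℝ] V →ₗ[ℝ] ℝ)
    (hR : IsAlgCurvatureTensor R)
    (h3 : kNonnegSecondKind b R 3) :
    ∀ e : Fin 4 → V, Orthonormal ℝ e → ∀ lam : ℝ,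
      0 ≤ R (e 0) (e 2) (e 0) (e 2) + lam ^ 2 * R (e 0) (e 3) (e 0) (e 3)
          + R (e 1) (e 2) (e 1) (e 2) + lam ^ 2 * R (e 1) (e 3) (e 1) (e 3)
          - 4 * lam * R (e 0) (e 1) (e 2) (e 3) := by
  intro e he lam
  have hee := orthonormal_iff_ite.mp he
  have key := isotropicPair_add_secondKind_nonneg b hR h3 he lam
  have hN₁ : formInner b (symProd (e 0) (e 1)) (symProd (e 0) (e 1)) = 2 := by
    simp [formInner_eq_formInnerBilin, symProd, hee, he.1]; norm_num
  have hN₂ : formInner b (diagForm (e 0) (e 1) (e 2)) (diagForm (e 0) (e 1) (e 2)) = 6 := by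
    simp [formInner_eq_formInnerBilin, diagForm, map_sub_form, hee, he.1]; norm_num
  have hN₃ : formInner b (diagForm (e 0) (e 1) (e 3)) (diagForm (e 0) (e 1) (e 3)) = 6 := by
    simp [formInner_eq_formInnerBilin, diagForm, map_sub_form, hee, he.1]; norm_num
  have h₁ := key (symProd (e 0) (e 1)) (isTracelessSymForm_symProd (he.2 (by decide)))
    (by rw [hN₁]; norm_num) ?_ ?_
  have h₂ := key (diagForm (e 0) (e 1) (e 2))
    (isTracelessSymForm_diagForm (he.1 0) (he.1 1) (he.1 2))
    (by rw [hN₂]; norm_num) ?_ ?_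
  have h₃ := key (diagForm (e 0) (e 1) (e 3))
    (isTracelessSymForm_diagForm (he.1 0) (he.1 1) (he.1 3))
    (by rw [hN₃]; norm_num) ?_ ?_
  · rw [hN₁, secondKind_symProd_self b hR] at h₁
    rw [hN₂, secondKind_diagForm b hR] at h₂
    rw [hN₃, secondKind_diagForm b hR] at h₃
    nlinarith [mul_nonneg (by positivity : (0 : ℝ) ≤ 1 + lam ^ 2) h₁, mul_nonneg (sq_nonneg lam) h₃,
      (by positivity : (0 : ℝ) < 1 + lam ^ 2)]
  all_goals simp [formInner_eq_formInnerBilin, symProd, diagForm, map_sub_form, hee]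

theorem stmt_10 {n : ℕ} (hn : 4 ≤ n)
    (b : OrthonormalBasis (Fin n) ℝ V)
    (R : V →ₗ[ℝ] V →ₗ[ℝ] V →ₗ[ℝ] V →ₗ[ℝ] ℝ)
    (hR : IsAlgCurvatureTensor R)
    (h3 : kNonnegSecondKind b R 3) :
    ∀ e : Fin 4 → V, Orthonormal ℝ e → ∀ lam : ℝ,
      0 ≤ R (e 0) (e 2) (e 0) (e 2) + lam ^ 2 * R (e 0) (e 3) (e 0) (e 3)
          + R (e 1) (e 2) (e 1) (e 2) + lam ^ 2 * R (e 1) (e 3) (e 1) (e 3)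
          - 4 * lam * R (e 0) (e 1) (e 2) (e 3) :=
  stmt_10_general b R hR h3
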